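/- arXiv:2212.12943 — 13 statements merged into one kernel-verified Lean document; each statement's English description precedes it below -/
import Mathlib

section
/- Let p be an odd prime, let n and m be positive integers with m dividing n, and let c be an element of the prime field F_p with c ≠ 1. Let F : F_{p^n} → F_{p^m} be a quadratic function, i.e., for all a, b ∈ F_{p^n} the second-order derivative x ↦ F(x+a+b) − F(x+a) − F(x+b) + F(x) is a constant function. Then F is balanced if and only if F is PcN, i.e., for every a ∈ F_{p^n} the map x ↦ F(x+a) − c·F(x) is balanced. -/
/-- For an odd prime `p`, `m ∣ n`, and `c ≠ 1` in the prime field `𝔽_p`, a quadratic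
function `F : 𝔽_{p^n} → 𝔽_{p^m}` is balanced if and only if it is PcN. -/
theorem quadratic_balanced_iff_PcN (p n m : ℕ) [Fact p.Prime] (hp : Odd p)
    (hn : 0 < n) (hm : 0 < m) (hmn : m ∣ n) (c : ZMod p) (hc : c ≠ 1)
    (F : GaloisField p n → GaloisField p m)
    (hquad : ∀ a b : GaloisField p n, ∃ k : GaloisField p m,
      ∀ x : GaloisField p n, F (x + a + b) - F (x + a) - F (x + b) + F x = k) :
    (∀ b : GaloisField p m, Nat.card {x : GaloisField p n // F x = b} = p ^ (n - m)) ↔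
    (∀ (a : GaloisField p n) (b : GaloisField p m),
      Nat.card {x : GaloisField p n //
        F (x + a) - algebraMap (ZMod p) (GaloisField p m) c * F x = b} = p ^ (n - m)) := by
  classical
  set ι := algebraMap (ZMod p) (GaloisField p m) with hιdef
  have hinj : Function.Injective ι := (algebraMap (ZMod p) (GaloisField p m)).injective
  have hu : (1 : ZMod p) - c ≠ 0 := sub_ne_zero.mpr (fun h => hc h.symm)
  have hιu : ι (1 - c) ≠ 0 := fun h => hu (hinj (by simpa using h))
  constructor
  · intro hbal a b
    -- choose the bilinear form
    set k : GaloisField p n → GaloisField p n → GaloisField p m :=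
      fun a b => (hquad a b).choose with hkdef
    have hk : ∀ a b x, F (x + a + b) - F (x + a) - F (x + b) + F x = k a b :=
      fun a b => (hquad a b).choose_spec
    have hk0 : ∀ a x, k a x = F (a + x) - F a - F x + F 0 := by
      intro a x
      have h := hk a x 0
      simp only [zero_add] at h
      exact h.symm
    have hkadd : ∀ a b x, k (a + b) x = k a x + k b x := by
      intro a b x
      have h1 := hk b x a
      rw [hk0 b x] at h1
      rw [hk0 (a + b) x, hk0 a x, hk0 b x]
      linear_combination h1
    have hksmul : ∀ (r : ZMod p) (a x : GaloisField p n), k (r • a) x = r • k a x := by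
      intro r a x
      have hr : ((r.val : ℕ) : ZMod p) = r := ZMod.natCast_rightInverse r
      have h1 := Nat.cast_smul_eq_nsmul (ZMod p) r.val a
      have h2 := Nat.cast_smul_eq_nsmul (ZMod p) r.val (k a x)
      rw [hr] at h1 h2
      calc k (r • a) x = k ((r.val : ℕ) • a) x := by rw [h1]
        _ = (r.val : ℕ) • k a x :=
            (AddMonoidHom.mk' (fun a => k a x) (fun a b => hkadd a b x)).map_nsmul r.val a
        _ = r • k a x := h2.symm
    set u : ZMod p := 1 - c with hudef
    set t : GaloisField p n := u⁻¹ • a with htdef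
    set d : GaloisField p m := F a - F 0 - ι u * (F t - F 0) with hddef
    have e4 : ι u * ι u⁻¹ = 1 := by rw [← map_mul, mul_inv_cancel₀ hu, map_one]
    have e5 : ι u = 1 - ι c := by rw [hudef, map_sub, map_one]
    have key : ∀ x, F (x + a) - ι c * F x = ι u * F (x + t) + d := by
      intro x
      have e1 : F (x + a) = F x + F a - F 0 + k a x := by
        rw [add_comm x a]; linear_combination -hk0 a x
      have e2 : F (x + t) = F x + F t - F 0 + k t x := by
        rw [add_comm x t]; linear_combination -hk0 t x
      have e3 : k t x = ι u⁻¹ * k a x := by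
        rw [htdef, hksmul, Algebra.smul_def]
      rw [e1, e2, e3, hddef]
      linear_combination (-(F x)) * e5 + (-(k a x)) * e4
    set e : GaloisField p m := (ι u)⁻¹ * (b - d) with hedef
    rw [← hbal e]
    apply Nat.card_congr
    refine (Equiv.subtypeEquivRight (q := fun x => F (x + t) = e) ?_).trans
      ((Equiv.addRight t).subtypeEquiv (q := fun y => F y = e) (fun x => ?_))
    · intro x
      rw [key x]
      constructor
      · intro h
        have h2 : b - d = ι u * F (x + t) := by linear_combination -h
        rw [hedef, h2, inv_mul_cancel_left₀ hιu]
      · intro h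
        rw [h, hedef, mul_inv_cancel_left₀ hιu]
        ring
    · simp [Equiv.coe_addRight]
  · intro hpcn b
    have h := hpcn 0 (ι (1 - c) * b)
    rw [← h]
    apply Nat.card_congr
    apply Equiv.subtypeEquivRight
    intro x
    have hrw : F (x + 0) - ι c * F x = ι (1 - c) * F x := by
      rw [add_zero, map_sub, map_one]; ring
    rw [hrw]
    exact ⟨fun hx => by rw [hx], fun hx => mul_left_cancel₀ hιu hx⟩
end

section
/- Let p be a prime, let n and m be positive integers with m ≤ n, and let ℘ be a permutation of F_{p^m} which is not the identity map. If F : F_{p^n} → F_{p^m} is P℘N, then F is balanced and the map x ↦ ℘(x) − x is a permutation of F_{p^m}. In particular, if n = m, then F and x ↦ ℘(x) − x are both permutations of F_{p^n}. -/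
/-- If `℘` is a non-identity permutation of `𝔽_{p^m}` and `F : 𝔽_{p^n} → 𝔽_{p^m}` is P℘N,
then `F` is balanced and `x ↦ ℘(x) - x` is a permutation of `𝔽_{p^m}`.
In particular, if `n = m` then `F` is a permutation. -/
theorem PpN_balanced_and_orthomorphism (p n m : ℕ) [Fact p.Prime]
    (hn : 0 < n) (hm : 0 < m) (hmn : m ≤ n)
    (P : GaloisField p m → GaloisField p m) (hP : Function.Bijective P) (hPid : P ≠ id)
    (F : GaloisField p n → GaloisField p m)
    (hF : ∀ (a : GaloisField p n) (b : GaloisField p m),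
      Nat.card {x : GaloisField p n // F (x + a) - P (F x) = b} = p ^ (n - m)) :
    (∀ b : GaloisField p m, Nat.card {x : GaloisField p n // F x = b} = p ^ (n - m)) ∧
    Function.Bijective (fun x : GaloisField p m => P x - x) ∧
    (n = m → Function.Bijective F) := by
  have hm' : m ≠ 0 := hm.ne'
  have hppos : 0 < p := (Fact.out : p.Prime).pos
  have hpow : 0 < p ^ (n - m) := pow_pos hppos _
  set g : GaloisField p m → GaloisField p m := fun y => y - P y with hg
  -- a = 0 case: g ∘ F is balanced
  have key : ∀ b, Nat.card {x : GaloisField p n // g (F x) = b} = p ^ (n - m) := by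
    intro b
    simpa [g] using hF 0 b
  -- g is surjective, hence bijective
  have gsurj : Function.Surjective g := by
    intro b
    have h := key b
    have hne : Nat.card {x : GaloisField p n // g (F x) = b} ≠ 0 := by
      rw [h]; exact hpow.ne'
    obtain ⟨x, hx⟩ := (Nat.card_ne_zero.mp hne).1
    exact ⟨F x, hx⟩
  have gbij : Function.Bijective g := (Finite.surjective_iff_bijective).mp gsurj
  -- F is balanced
  have bal : ∀ b : GaloisField p m,
      Nat.card {x : GaloisField p n // F x = b} = p ^ (n - m) := by
    intro b
    have e : ∀ x : GaloisField p n, g (F x) = g b ↔ F x = b := fun x =>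
      gbij.injective.eq_iff
    calc Nat.card {x : GaloisField p n // F x = b}
        = Nat.card {x : GaloisField p n // g (F x) = g b} :=
          Nat.card_congr (Equiv.subtypeEquivRight fun x => (e x).symm)
      _ = p ^ (n - m) := key (g b)
  refine ⟨bal, ?_, ?_⟩
  · have : (fun x : GaloisField p m => P x - x) = (fun y => -y) ∘ g := by
      funext x; simp [g, neg_sub]
    rw [this]
    exact neg_involutive.bijective.comp gbij
  · rintro rfl
    have bal1 : ∀ b : GaloisField p n,
        Nat.card {x : GaloisField p n // F x = b} = 1 := by
      intro b; simpa using bal b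
    constructor
    · intro x₁ x₂ h
      obtain ⟨a, ha⟩ := Nat.card_eq_one_iff_exists.mp (bal1 (F x₂))
      have h1 := ha ⟨x₁, h⟩
      have h2 := ha ⟨x₂, rfl⟩
      have := h1.trans h2.symm
      exact congrArg Subtype.val this
    · intro b
      have hne : Nat.card {x : GaloisField p n // F x = b} ≠ 0 := by
        rw [bal1 b]; exact one_ne_zero
      obtain ⟨x, hx⟩ := (Nat.card_ne_zero.mp hne).1
      exact ⟨x, hx⟩
end

section
/- Let p be a prime, let n and m be positive integers with m ≤ n, and let ℘ be an orthomorphism of F_{p^m}, i.e., both ℘ and x ↦ ℘(x) − x are permutations of F_{p^m}. Let F : F_{p^n} → F_{p^m} be F_p-linear (additive). Then F is P℘N if and only if F is balanced. In particular, if n = m, then an F_p-linear function F on F_{p^n} is P℘N if and only if F is a permutation. -/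
/-- For an orthomorphism `℘` of `𝔽_{p^m}`, an `𝔽_p`-linear (additive) function
`F : 𝔽_{p^n} → 𝔽_{p^m}` is P℘N if and only if it is balanced. In particular, if `n = m`,
then a linear function `F` is P℘N if and only if it is a permutation. -/
theorem linear_PpN_iff_balanced (p n m : ℕ) [Fact p.Prime]
    (hn : 0 < n) (hm : 0 < m) (hmn : m ≤ n)
    (P : GaloisField p m → GaloisField p m) (hP : Function.Bijective P)
    (hP' : Function.Bijective (fun x : GaloisField p m => P x - x))
    (F : GaloisField p n → GaloisField p m)
    (hadd : ∀ x y : GaloisField p n, F (x + y) = F x + F y) :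
    ((∀ (a : GaloisField p n) (b : GaloisField p m),
        Nat.card {x : GaloisField p n // F (x + a) - P (F x) = b} = p ^ (n - m)) ↔
      (∀ b : GaloisField p m, Nat.card {x : GaloisField p n // F x = b} = p ^ (n - m))) ∧
    (n = m →
      ((∀ (a : GaloisField p n) (b : GaloisField p m),
          Nat.card {x : GaloisField p n // F (x + a) - P (F x) = b} = p ^ (n - m)) ↔
        Function.Bijective F)) := by
  have hg : Function.Bijective (fun y : GaloisField p m => y - P y) := by
    have h1 : (fun y : GaloisField p m => y - P y)
        = (fun y : GaloisField p m => -y) ∘ (fun x => P x - x) := by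
      funext y; simp [neg_sub]
    rw [h1]
    exact (neg_involutive.bijective).comp hP'
  have key : (∀ (a : GaloisField p n) (b : GaloisField p m),
        Nat.card {x : GaloisField p n // F (x + a) - P (F x) = b} = p ^ (n - m)) ↔
      (∀ b : GaloisField p m, Nat.card {x : GaloisField p n // F x = b} = p ^ (n - m)) := by
    constructor
    · intro h b
      have h0 := h 0 (b - P b)
      have heq : Nat.card {x : GaloisField p n // F x = b}
          = Nat.card {x : GaloisField p n // F (x + 0) - P (F x) = b - P b} := by
        apply Nat.card_congr (Equiv.subtypeEquivRight fun x => ?_)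
        rw [add_zero]
        constructor
        · intro hx; rw [hx]
        · intro hx
          have : F x - P (F x) = b - P b := hx
          exact hg.injective this
      rw [heq, h0]
    · intro h a b
      obtain ⟨c, hc⟩ := hg.surjective (b - F a)
      have hc' : c - P c = b - F a := hc
      have heq : Nat.card {x : GaloisField p n // F (x + a) - P (F x) = b}
          = Nat.card {x : GaloisField p n // F x = c} := by
        apply Nat.card_congr (Equiv.subtypeEquivRight fun x => ?_)
        rw [hadd]
        constructor
        · intro hx
          apply hg.injective
          show F x - P (F x) = c - P c
          linear_combination hx - hc'
        · intro hx
          rw [hx]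
          linear_combination hc'
      rw [heq]; exact h c
  refine ⟨key, fun hnm => ?_⟩
  subst hnm
  rw [key]
  simp only [Nat.sub_self, pow_zero]
  constructor
  · intro h
    constructor
    · intro x y hxy
      have hs := (Nat.card_eq_one_iff_unique.mp (h (F y))).1
      have := hs.elim (⟨x, hxy⟩ : {z // F z = F y}) ⟨y, rfl⟩
      exact congrArg Subtype.val this
    · intro b
      have hne := (Nat.card_eq_one_iff_unique.mp (h b)).2
      obtain ⟨x, hx⟩ := hne
      exact ⟨x, hx⟩
  · intro hF b
    rw [Nat.card_eq_one_iff_unique]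
    obtain ⟨x, hx⟩ := hF.surjective b
    refine ⟨⟨fun u v => ?_⟩, ⟨x, hx⟩⟩
    exact Subtype.ext (hF.injective (u.2.trans v.2.symm))
end

section
/- Let p be a prime, let n and m be positive integers with m ≤ n, and let ℘ be an F_p-linear (additive) orthomorphism of F_{p^m}, i.e., ℘ is additive and both ℘ and x ↦ ℘(x) − x are permutations of F_{p^m}. Let F : F_{p^n} → F_{p^m} be an affine function, i.e., F(x) = L(x) − α for an F_p-linear (additive) map L : F_{p^n} → F_{p^m} and a constant α ∈ F_{p^m}. Then F is P℘N if and only if F is balanced. In particular, if n = m, then an affine function F on F_{p^n} is P℘N if and only if F is a permutation. -/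
private lemma nat_card_fiber_one_iff {A B : Type*} [Finite A] (F : A → B) :
    (∀ b : B, Nat.card {x : A // F x = b} = 1) ↔ Function.Bijective F := by
  rw [Function.bijective_iff_existsUnique]
  refine forall_congr' fun b => ?_
  rw [Nat.card_eq_one_iff_exists]
  constructor
  · rintro ⟨⟨x, hx⟩, hu⟩
    exact ⟨x, hx, fun y hy => by simpa using congrArg Subtype.val (hu ⟨y, hy⟩)⟩
  · rintro ⟨x, hx, hu⟩
    exact ⟨⟨x, hx⟩, fun y => Subtype.ext (hu y.1 y.2)⟩

/-- For an `𝔽_p`-linear (additive) orthomorphism `℘` of `𝔽_{p^m}`, an affine function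
`F(x) = L(x) - α` (with `L` additive) from `𝔽_{p^n}` to `𝔽_{p^m}` is P℘N if and only if
it is balanced. In particular, if `n = m`, then `F` is P℘N if and only if it is a
permutation. -/
theorem affine_PpN_iff_balanced (p n m : ℕ) [Fact p.Prime]
    (hn : 0 < n) (hm : 0 < m) (hmn : m ≤ n)
    (P : GaloisField p m → GaloisField p m)
    (hPadd : ∀ x y : GaloisField p m, P (x + y) = P x + P y)
    (hP : Function.Bijective P)
    (hP' : Function.Bijective (fun x : GaloisField p m => P x - x))
    (F L : GaloisField p n → GaloisField p m) (α : GaloisField p m)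
    (hLadd : ∀ x y : GaloisField p n, L (x + y) = L x + L y)
    (hFaff : ∀ x : GaloisField p n, F x = L x - α) :
    ((∀ (a : GaloisField p n) (b : GaloisField p m),
        Nat.card {x : GaloisField p n // F (x + a) - P (F x) = b} = p ^ (n - m)) ↔
      (∀ b : GaloisField p m, Nat.card {x : GaloisField p n // F x = b} = p ^ (n - m))) ∧
    (n = m →
      ((∀ (a : GaloisField p n) (b : GaloisField p m),
          Nat.card {x : GaloisField p n // F (x + a) - P (F x) = b} = p ^ (n - m)) ↔
        Function.Bijective F)) := by
  -- P and L as additive monoid homs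
  set Pm : GaloisField p m →+ GaloisField p m := AddMonoidHom.mk' P hPadd with hPm
  have hPsub : ∀ u v, P (u - v) = P u - P v := fun u v => Pm.map_sub u v
  set Qe : GaloisField p m ≃ GaloisField p m :=
    Equiv.ofBijective (fun x => P x - x) hP' with hQe
  -- the key pointwise equivalence
  have key : ∀ (a : GaloisField p n) (b : GaloisField p m) (x : GaloisField p n),
      (F (x + a) - P (F x) = b) ↔ L x = Qe.symm (L a - α + P α - b) := by
    intro a b x
    rw [hFaff, hFaff, hLadd, hPsub, Equiv.eq_symm_apply]
    show _ ↔ P (L x) - L x = _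
    constructor <;> intro h <;> linear_combination -h
  -- balancedness of L (the common intermediate condition)
  have hLbal : (∀ (a : GaloisField p n) (b : GaloisField p m),
      Nat.card {x : GaloisField p n // F (x + a) - P (F x) = b} = p ^ (n - m)) ↔
      (∀ c : GaloisField p m, Nat.card {x : GaloisField p n // L x = c} = p ^ (n - m)) := by
    constructor
    · intro h c
      have h0 := h 0 (L 0 - α + P α - Qe c)
      rw [Nat.card_congr (Equiv.subtypeEquivRight (key 0 (L 0 - α + P α - Qe c)))] at h0
      simpa using h0
    · intro h a b
      rw [Nat.card_congr (Equiv.subtypeEquivRight (key a b))]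
      exact h _
  have hFbal : (∀ b : GaloisField p m, Nat.card {x : GaloisField p n // F x = b} = p ^ (n - m)) ↔
      (∀ c : GaloisField p m, Nat.card {x : GaloisField p n // L x = c} = p ^ (n - m)) := by
    have keyF : ∀ (b : GaloisField p m) (x : GaloisField p n),
        F x = b ↔ L x = b + α := by
      intro b x; rw [hFaff, sub_eq_iff_eq_add]
    constructor
    · intro h c
      have h0 := h (c - α)
      rw [Nat.card_congr (Equiv.subtypeEquivRight (keyF (c - α)))] at h0
      simpa using h0
    · intro h b
      rw [Nat.card_congr (Equiv.subtypeEquivRight (keyF b))]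
      exact h _
  refine ⟨hLbal.trans hFbal.symm, fun hnm => ?_⟩
  subst hnm
  rw [hLbal.trans hFbal.symm]
  simp only [Nat.sub_self, pow_zero]
  exact nat_card_fiber_one_iff F
end

section
/- Let n, j, k be positive integers with j dividing n, n > 2(j+k) and gcd(2^n − 1, 2^k + 1) = 1. Let c ∈ F_{2^n} be an element which is not a (2^j − 1)-th power in F_{2^n}, and set ℘(x) = c·x^{2^j}. Then the Gold function F(x) = x^{2^k+1} on F_{2^n} is not P℘N; more precisely, there exists a ∈ F_{2^n}, a ≠ 0, such that the map x ↦ (x+a)^{2^k+1} + c·x^{2^j(2^k+1)} is not a permutation of F_{2^n}. -/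
set_option linter.unusedSectionVars false

open Finset Polynomial

namespace GoldPpN

variable {F : Type*} [Field F] [Fintype F] [DecidableEq F] [CharP F 2]

/-- Absolute trace-like map `x ↦ ∑_{i<n} x^{2^i}`. -/
noncomputable def tr (n : ℕ) (x : F) : F := ∑ i ∈ Finset.range n, x ^ 2 ^ i

/-- The canonical additive character of `F` with values in `ℤ`. -/
noncomputable def eps (n : ℕ) (x : F) : ℤ := if tr n x = 0 then 1 else -1

variable {n : ℕ}

lemma tr_add (x y : F) : tr n (x + y) = tr n x + tr n y := by
  unfold tr
  rw [← Finset.sum_add_distrib]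
  exact Finset.sum_congr rfl fun i _ => add_pow_char_pow ..

lemma pow_card_eq (hcard : Fintype.card F = 2 ^ n) (x : F) : x ^ 2 ^ n = x := by
  rw [← hcard]; exact FiniteField.pow_card x

lemma tr_sq (hcard : Fintype.card F = 2 ^ n) (x : F) : tr n x ^ 2 = tr n x := by
  have h1 : tr n x ^ 2 = ∑ i ∈ Finset.range n, x ^ 2 ^ (i + 1) := by
    unfold tr
    rw [CharTwo.sum_sq]
    exact Finset.sum_congr rfl fun i _ => by rw [← pow_mul, pow_succ]
  have h2 : (∑ i ∈ Finset.range n, x ^ 2 ^ (i + 1)) + x ^ 2 ^ 0 =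
      tr n x + x ^ 2 ^ n := by
    rw [← Finset.sum_range_succ' (fun i => x ^ 2 ^ i) n]
    rw [Finset.sum_range_succ (fun i => x ^ 2 ^ i) n]
    rfl
  rw [pow_card_eq hcard] at h2
  have h3 : (∑ i ∈ Finset.range n, x ^ 2 ^ (i + 1)) + x = tr n x + x := by
    simpa using h2
  have := add_right_cancel h3
  rw [h1, this]

lemma tr_zero_or_one (hcard : Fintype.card F = 2 ^ n) (x : F) :
    tr n x = 0 ∨ tr n x = 1 := by
  have h := tr_sq (F := F) hcard x
  have h2 : tr n x * (tr n x - 1) = 0 := by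
    rw [mul_sub, mul_one, ← sq, h, sub_self]
  rcases mul_eq_zero.mp h2 with h3 | h3
  · exact Or.inl h3
  · exact Or.inr (by linear_combination h3)

lemma tr_zero : tr n (0 : F) = 0 := by
  unfold tr
  exact Finset.sum_eq_zero fun i _ => zero_pow (by positivity)

lemma eps_zero : eps n (0 : F) = 1 := by simp [eps, tr_zero]

lemma eps_add (hcard : Fintype.card F = 2 ^ n) (x y : F) :
    eps n (x + y) = eps n x * eps n y := by
  unfold eps
  have hxy := tr_add (n := n) x y
  have h1 : (1 : F) ≠ 0 := one_ne_zero
  have h11 : (1 : F) + 1 = 0 := CharTwo.add_self_eq_zero 1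
  rcases tr_zero_or_one hcard x with hx | hx <;>
    rcases tr_zero_or_one hcard y with hy | hy <;>
    simp [hx, hy, hxy, h1, h11]

lemma tr_pow_two (hcard : Fintype.card F = 2 ^ n) (x : F) :
    tr n (x ^ 2) = tr n x := by
  have h1 : tr n (x ^ 2) = tr n x ^ 2 := by
    unfold tr
    rw [CharTwo.sum_sq]
    exact Finset.sum_congr rfl fun i _ => by
      rw [← pow_mul, ← pow_mul, mul_comm 2 (2 ^ i)]
  rw [h1, tr_sq hcard]

lemma eps_pow_two (hcard : Fintype.card F = 2 ^ n) (x : F) :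
    eps n (x ^ 2) = eps n x := by
  unfold eps; rw [tr_pow_two hcard]

lemma eps_pow_pow (hcard : Fintype.card F = 2 ^ n) (m : ℕ) (x : F) :
    eps n (x ^ 2 ^ m) = eps n x := by
  induction m with
  | zero => simp
  | succ i ih =>
      have : x ^ 2 ^ (i + 1) = (x ^ 2 ^ i) ^ 2 := by
        rw [← pow_mul, pow_succ]
      rw [this, eps_pow_two hcard, ih]

lemma exists_tr_ne_zero (hn : n ≠ 0) (hcard : Fintype.card F = 2 ^ n) :
    ∃ x : F, tr n x ≠ 0 := by
  by_contra h
  push_neg at h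
  set p : F[X] := ∑ i ∈ Finset.range n, (X : F[X]) ^ 2 ^ i with hp
  have hcoeff : p.coeff (2 ^ (n - 1)) = 1 := by
    rw [hp, Polynomial.finset_sum_coeff]
    rw [Finset.sum_eq_single (n - 1)]
    · rw [Polynomial.coeff_X_pow]; simp
    · intro i hi hne
      rw [Polynomial.coeff_X_pow]
      have : ¬(2 : ℕ) ^ (n - 1) = 2 ^ i := by
        intro hEq
        exact hne (Nat.pow_right_injective (le_refl 2) hEq.symm)
      simp [this]
    · intro hmem
      exact absurd (Finset.mem_range.mpr (Nat.sub_lt (Nat.pos_of_ne_zero hn) one_pos)) hmem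
  have hp0 : p ≠ 0 := fun h0 => by simp [h0] at hcoeff
  have hdeg : p.natDegree ≤ 2 ^ (n - 1) := by
    apply Polynomial.natDegree_sum_le_of_forall_le
    intro i hi
    rw [Polynomial.natDegree_X_pow]
    exact Nat.pow_le_pow_right (by norm_num) (Nat.le_sub_one_of_lt (Finset.mem_range.mp hi))
  have hroots : (Finset.univ : Finset F).val ⊆ p.roots := by
    intro x hx
    rw [Polynomial.mem_roots hp0]
    have : p.eval x = tr n x := by
      rw [hp]
      simp [Polynomial.eval_finset_sum, tr]
    rw [Polynomial.IsRoot.def, this]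
    exact h x
  have hle := Polynomial.card_le_degree_of_subset_roots hroots
  rw [Finset.card_univ, hcard] at hle
  have : (2:ℕ) ^ (n-1) < 2 ^ n := Nat.pow_lt_pow_right (by norm_num) (Nat.sub_lt (Nat.pos_of_ne_zero hn) one_pos)
  omega

lemma sum_eps_eq_zero (hn : n ≠ 0) (hcard : Fintype.card F = 2 ^ n) :
    ∑ b : F, eps n b = 0 := by
  obtain ⟨x₀, hx₀⟩ := exists_tr_ne_zero hn hcard
  have hshift : ∑ b : F, eps n (b + x₀) = ∑ b : F, eps n b :=
    Fintype.sum_bijective _ (Equiv.addRight x₀).bijective _ _ fun b => rfl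
  have hsplit : ∀ b : F, eps n (b + x₀) = eps n b * eps n x₀ := fun b => eps_add hcard b x₀
  have hx0 : eps n x₀ = -1 := by simp [eps, hx₀]
  rw [Finset.sum_congr rfl fun b _ => hsplit b] at hshift
  rw [← Finset.sum_mul, hx0] at hshift
  linarith

lemma sum_eps_mul (hn : n ≠ 0) (hcard : Fintype.card F = 2 ^ n) (z : F) :
    ∑ b : F, eps n (b * z) = if z = 0 then (2 ^ n : ℤ) else 0 := by
  split_ifs with hz
  · subst hz
    simp only [mul_zero, eps_zero, Finset.sum_const, Finset.card_univ, hcard]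
    simp
  · have hre : ∑ b : F, eps n (b * z) = ∑ b : F, eps n b :=
      Fintype.sum_bijective (fun b : F => b * z)
        (Equiv.mulRight₀ z hz).bijective _ _ fun b => rfl
    rw [hre, sum_eps_eq_zero hn hcard]

/-- Splitting a sum over `F` into the zero term and a sum over units. -/
lemma sum_split (f : F → ℤ) : ∑ x : F, f x = f 0 + ∑ u : Fˣ, f u := by
  have h1 : ∑ u : Fˣ, f ↑u = ∑ a : {x : F // x ≠ 0}, f ↑a :=
    Fintype.sum_equiv unitsEquivNeZero (fun u : Fˣ => f ↑u)
      (fun a : {x : F // x ≠ 0} => f ↑a) (fun u => rfl)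
  have h2 : ∑ a : {x : F // x ≠ 0}, f ↑a = ∑ x ∈ Finset.univ.filter (· ≠ 0), f x :=
    (Finset.sum_subtype (Finset.univ.filter (· ≠ 0)) (fun x => by simp) f).symm
  rw [h1, h2, Finset.filter_ne' Finset.univ 0,
    ← Finset.add_sum_erase _ f (Finset.mem_univ 0)]

/-- The number of `d`-th roots in `Fˣ` of any element of `F` is at most `d`. -/
lemma fiber_card_le (d : ℕ) (hd : 0 < d) (w : F) :
    ((Finset.univ : Finset Fˣ).filter (fun u : Fˣ => (u : F) ^ d = w)).card ≤ d := by
  classical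
  set Z := ((Finset.univ : Finset Fˣ).filter (fun u : Fˣ => (u : F) ^ d = w)).image
    (fun u : Fˣ => (u : F)) with hZ
  have hcardZ : Z.card =
      ((Finset.univ : Finset Fˣ).filter (fun u : Fˣ => (u : F) ^ d = w)).card := by
    apply Finset.card_image_of_injective
    exact fun _ _ h => Units.ext h
  have hsub : Z.val ⊆ (X ^ d - C w : F[X]).roots := by
    intro x hx
    simp only [hZ, Finset.mem_val, Finset.mem_image, Finset.mem_filter] at hx
    obtain ⟨u, ⟨-, hu⟩, rfl⟩ := hx
    rw [Polynomial.mem_roots (Polynomial.X_pow_sub_C_ne_zero hd w)]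
    simp [Polynomial.IsRoot.def, hu]
  have := Polynomial.card_le_degree_of_subset_roots hsub
  rwa [Polynomial.natDegree_X_pow_sub_C, hcardZ] at this

/-- Key quadratic bound on the character sum `T β = ∑_{u ≠ 0} ε(β u^d)`. -/
lemma T_bound (hn : n ≠ 0) (hcard : Fintype.card F = 2 ^ n) (d : ℕ) (hd : 0 < d)
    (β : F) (hβ : β ≠ 0) :
    (∑ u : Fˣ, eps n (β * (u : F) ^ d)) ^ 2 ≤ 2 ^ n * (d : ℤ) ^ 2 := by
  classical
  set T : F → ℤ := fun γ => ∑ u : Fˣ, eps n (γ * (u : F) ^ d) with hT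
  set M : ℕ := Fintype.card Fˣ with hM
  have hMpos : 0 < M := Fintype.card_pos
  -- invariance of T under multiplication by d-th powers of units
  have hinv : ∀ (γ : F) (w : Fˣ), T (γ * (w : F) ^ d) = T γ := by
    intro γ w
    have := Fintype.sum_bijective (fun u : Fˣ => w * u) (Equiv.mulLeft w).bijective
      (fun u : Fˣ => eps n ((γ * (w : F) ^ d) * (u : F) ^ d))
      (fun u : Fˣ => eps n (γ * (u : F) ^ d)) ?_
    · exact this
    · intro u
      congr 1
      push_cast
      ring
  -- second moment
  have hsq : ∀ γ : F, T γ ^ 2 =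
      ∑ u : Fˣ, ∑ u' : Fˣ, eps n (γ * ((u : F) ^ d + (u' : F) ^ d)) := by
    intro γ
    rw [hT, sq, Finset.sum_mul_sum]
    refine Finset.sum_congr rfl fun u _ => Finset.sum_congr rfl fun u' _ => ?_
    rw [← eps_add hcard, mul_add]
  set R : ℤ := ∑ u : Fˣ, ∑ u' : Fˣ, (if (u : F) ^ d = (u' : F) ^ d then (1:ℤ) else 0) with hR
  have hQtotal : ∑ γ : F, T γ ^ 2 = 2 ^ n * R := by
    calc ∑ γ : F, T γ ^ 2
        = ∑ γ : F, ∑ u : Fˣ, ∑ u' : Fˣ, eps n (γ * ((u : F) ^ d + (u' : F) ^ d)) :=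
          Finset.sum_congr rfl fun γ _ => hsq γ
      _ = ∑ u : Fˣ, ∑ u' : Fˣ, ∑ γ : F, eps n (γ * ((u : F) ^ d + (u' : F) ^ d)) := by
          rw [Finset.sum_comm]
          exact Finset.sum_congr rfl fun u _ => Finset.sum_comm
      _ = ∑ u : Fˣ, ∑ u' : Fˣ, (if (u : F) ^ d = (u' : F) ^ d then (2 ^ n : ℤ) else 0) := by
          refine Finset.sum_congr rfl fun u _ => Finset.sum_congr rfl fun u' _ => ?_
          rw [sum_eps_mul hn hcard]
          congr 1
          rw [eq_iff_iff]
          constructor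
          · intro h; rwa [← CharTwo.sub_eq_add, sub_eq_zero] at h
          · intro h; rw [← sub_eq_zero, CharTwo.sub_eq_add] at h; exact h
      _ = 2 ^ n * R := by
          rw [hR, Finset.mul_sum]
          refine Finset.sum_congr rfl fun u _ => ?_
          rw [Finset.mul_sum]
          refine Finset.sum_congr rfl fun u' _ => ?_
          split_ifs <;> ring
  have hT0 : T 0 = (M : ℤ) := by
    rw [hT]
    simp only [zero_mul, eps_zero]
    rw [Finset.sum_const, Finset.card_univ]
    simp [hM]
  have hQunits : ∑ u : Fˣ, T (u : F) ^ 2 = 2 ^ n * R - (M : ℤ) ^ 2 := by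
    have := sum_split (F := F) (fun γ => T γ ^ 2)
    rw [hQtotal, hT0] at this
    have h2 : ∑ u : Fˣ, T (u : F) ^ 2 = 2 ^ n * R - (M:ℤ)^2 := by
      rw [sq (M:ℤ)] at this ⊢
      linarith
    exact h2
  -- R ≤ M * d
  have hRle : R ≤ (M : ℤ) * d := by
    rw [hR]
    have hinner : ∀ u : Fˣ,
        (∑ u' : Fˣ, if (u : F) ^ d = (u' : F) ^ d then (1:ℤ) else 0) ≤ (d : ℤ) := by
      intro u
      have : (∑ u' : Fˣ, if (u' : F) ^ d = (u : F) ^ d then (1:ℤ) else 0) ≤ (d : ℤ) := by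
        rw [Finset.sum_boole]
        exact_mod_cast fiber_card_le d hd ((u : F) ^ d)
      refine le_trans (le_of_eq ?_) this
      exact Finset.sum_congr rfl fun u' _ => if_congr ⟨Eq.symm, Eq.symm⟩ rfl rfl
    calc ∑ u : Fˣ, ∑ u' : Fˣ, (if (u : F) ^ d = (u' : F) ^ d then (1:ℤ) else 0)
        ≤ ∑ _u : Fˣ, (d : ℤ) := Finset.sum_le_sum fun u _ => hinner u
      _ = (M : ℤ) * d := by rw [Finset.sum_const, Finset.card_univ]; simp [hM, mul_comm]
  -- the coset of the image subgroup
  set βu : Fˣ := Units.mk0 β hβ with hβu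
  set H' : Finset Fˣ := Finset.univ.image (fun u : Fˣ => u ^ d) with hH'
  have hMleH : M ≤ H'.card * d := by
    have hkey := Finset.card_eq_sum_card_image (fun u : Fˣ => u ^ d)
      (Finset.univ : Finset Fˣ)
    have hbound : ∀ w ∈ H', ((Finset.univ : Finset Fˣ).filter
        (fun u : Fˣ => u ^ d = w)).card ≤ d := by
      intro w _
      have : ((Finset.univ : Finset Fˣ).filter (fun u : Fˣ => u ^ d = w)).card =
          ((Finset.univ : Finset Fˣ).filter (fun u : Fˣ => (u : F) ^ d = (w : F))).card := by
        congr 1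
        apply Finset.filter_congr
        intro u _
        constructor
        · intro h; rw [← h, Units.val_pow_eq_pow_val]
        · intro h; exact Units.ext (by rw [Units.val_pow_eq_pow_val]; exact h)
      rw [this]
      exact fiber_card_le d hd (w : F)
    calc M = ∑ w ∈ H', ((Finset.univ : Finset Fˣ).filter (fun u : Fˣ => u ^ d = w)).card := by
            rw [hM, ← Finset.card_univ, hkey]
      _ ≤ ∑ _w ∈ H', d := Finset.sum_le_sum hbound
      _ = H'.card * d := by rw [Finset.sum_const, smul_eq_mul]
  set C : Finset Fˣ := H'.image (fun h => βu * h) with hC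
  have hCsum : ∑ γ ∈ C, T (γ : F) ^ 2 = H'.card * T β ^ 2 := by
    rw [hC, Finset.sum_image (by intro x _ y _ hxy; exact mul_left_cancel hxy)]
    have : ∀ h ∈ H', T ((βu * h : Fˣ) : F) ^ 2 = T β ^ 2 := by
      intro h hh
      rw [hH', Finset.mem_image] at hh
      obtain ⟨w, -, rfl⟩ := hh
      have : ((βu * w ^ d : Fˣ) : F) = β * (w : F) ^ d := by
        rw [Units.val_mul, Units.val_pow_eq_pow_val, hβu, Units.val_mk0]
      rw [this, hinv β w]
    rw [Finset.sum_congr rfl this, Finset.sum_const, nsmul_eq_mul]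
  have hCsub : ∑ γ ∈ C, T (γ : F) ^ 2 ≤ ∑ γ : Fˣ, T (γ : F) ^ 2 :=
    Finset.sum_le_sum_of_subset_of_nonneg (Finset.subset_univ C)
      (fun i _ _ => sq_nonneg _)
  -- assemble
  have hchain : (H'.card : ℤ) * T β ^ 2 ≤ 2 ^ n * ((M : ℤ) * d) := by
    have h1 : (H'.card : ℤ) * T β ^ 2 ≤ 2 ^ n * R - (M:ℤ)^2 := by
      rw [← hCsum, ← hQunits]; exact hCsub
    have h2 : (2:ℤ) ^ n * R ≤ 2 ^ n * ((M:ℤ) * d) :=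
      mul_le_mul_of_nonneg_left hRle (by positivity)
    nlinarith [sq_nonneg ((M:ℤ))]
  have hfinal : (M : ℤ) * T β ^ 2 ≤ (M : ℤ) * (2 ^ n * (d:ℤ) ^ 2) := by
    have hM' : (M : ℤ) ≤ (H'.card : ℤ) * d := by exact_mod_cast hMleH
    have h3 : (M : ℤ) * T β ^ 2 ≤ ((H'.card : ℤ) * d) * T β ^ 2 :=
      mul_le_mul_of_nonneg_right hM' (sq_nonneg _)
    have h4 : ((H'.card : ℤ) * d) * T β ^ 2 = (d : ℤ) * ((H'.card : ℤ) * T β ^ 2) := by ring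
    have h5 : (d : ℤ) * ((H'.card : ℤ) * T β ^ 2) ≤ (d : ℤ) * (2 ^ n * ((M : ℤ) * d)) :=
      mul_le_mul_of_nonneg_left hchain (by positivity)
    calc (M : ℤ) * T β ^ 2 ≤ (d : ℤ) * (2 ^ n * ((M : ℤ) * d)) := by
          rw [← h4] at h5; exact le_trans h3 h5
      _ = (M : ℤ) * (2 ^ n * (d:ℤ) ^ 2) := by ring
  have hMposZ : (0:ℤ) < (M : ℤ) := by exact_mod_cast hMpos
  exact le_of_mul_le_mul_left hfinal hMposZ

/-- Main counting lemma: existence of a solution `(s,v)`, `s ≠ 0`, `v ≠ 0`, of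
`v + v^{2^k} + 1 + c·s^{(2^k+1)(2^j-1)} = 0`. -/
lemma exists_sv (hn : n ≠ 0) (hcard : Fintype.card F = 2 ^ n)
    (j k : ℕ) (hj : 0 < j) (hk : 0 < k) (hbig : 2 * (j + k) < n)
    (hgcd : Nat.gcd (2 ^ n - 1) (2 ^ k + 1) = 1)
    (c : F) (hc : ∀ y : F, y ^ (2 ^ j - 1) ≠ c) :
    ∃ s v : F, s ≠ 0 ∧ v ≠ 0 ∧
      v + v ^ 2 ^ k + 1 + c * s ^ ((2 ^ k + 1) * (2 ^ j - 1)) = 0 := by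
  classical
  set d : ℕ := 2 ^ j - 1 with hd
  set e' : ℕ := (2 ^ k + 1) * d with he'
  have h2j : (2:ℕ) ≤ 2 ^ j := by
    calc (2:ℕ) = 2 ^ 1 := rfl
    _ ≤ 2 ^ j := Nat.pow_le_pow_right (by norm_num) hj
  have h2k : (2:ℕ) ≤ 2 ^ k := by
    calc (2:ℕ) = 2 ^ 1 := rfl
    _ ≤ 2 ^ k := Nat.pow_le_pow_right (by norm_num) hk
  have hdpos : 0 < d := by omega
  have hkn : k ≤ n := by omega
  have hc0 : c ≠ 0 := by
    intro h
    exact hc 0 (by rw [h, zero_pow (by omega)])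
  set M : ℕ := Fintype.card Fˣ with hM
  have hMcard : M = 2 ^ n - 1 := by rw [hM, Fintype.card_units, hcard]
  have h2n32 : (32:ℕ) ≤ 2 ^ n := by
    calc (32:ℕ) = 2 ^ 5 := rfl
    _ ≤ 2 ^ n := Nat.pow_le_pow_right (by norm_num) (by omega)
  have hM1 : 1 < M := by omega
  -- the incomplete character sum and its reindexed form
  set T : F → ℤ := fun β => ∑ s : Fˣ, eps n (β * (s : F) ^ e') with hT
  have hTre : ∀ β : F, T β = ∑ u : Fˣ, eps n (β * (u : F) ^ d) := by
    have hcop : Nat.Coprime (2 ^ k + 1) M := by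
      rw [Nat.Coprime, hMcard, Nat.gcd_comm]
      exact hgcd
    obtain ⟨m', -, hm'⟩ := Nat.exists_mul_mod_eq_one_of_coprime hcop hM1
    have hpowinv : ∀ u : Fˣ, (u ^ (2 ^ k + 1)) ^ m' = u := by
      intro u
      rw [← pow_mul]
      have h1 : (2 ^ k + 1) * m' = M * ((2 ^ k + 1) * m' / M) + 1 := by
        conv_lhs => rw [← Nat.div_add_mod ((2 ^ k + 1) * m') M]
        rw [hm']
      rw [h1, pow_add, pow_mul, hM, pow_card_eq_one, one_pow, pow_one, one_mul]
    have hpowinv2 : ∀ u : Fˣ, (u ^ m') ^ (2 ^ k + 1) = u := by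
      intro u
      rw [← pow_mul, mul_comm, pow_mul]
      exact hpowinv u
    let e1 : Fˣ ≃ Fˣ :=
      ⟨fun u => u ^ (2 ^ k + 1), fun u => u ^ m', hpowinv, hpowinv2⟩
    intro β
    refine Fintype.sum_bijective (fun u : Fˣ => u ^ (2 ^ k + 1)) e1.bijective
      (fun s : Fˣ => eps n (β * (s : F) ^ e'))
      (fun u : Fˣ => eps n (β * (u : F) ^ d)) ?_
    intro x
    show eps n (β * (x : F) ^ e') = eps n (β * ((x ^ (2 ^ k + 1) : Fˣ) : F) ^ d)
    rw [Units.val_pow_eq_pow_val, ← pow_mul, ← he']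
  -- the "bad" set of Frobenius-fixed elements
  set Bad : Finset F := Finset.univ.filter (fun b : F => b ^ 2 ^ k = b) with hBad
  have hbadiff : ∀ b : F, (b + b ^ 2 ^ (n - k) = 0) ↔ (b ^ 2 ^ k = b) := by
    intro b
    have hiff1 : (b + b ^ 2 ^ (n - k) = 0) ↔ b = b ^ 2 ^ (n - k) := by
      constructor
      · intro h; rwa [← CharTwo.sub_eq_add, sub_eq_zero] at h
      · intro h; rw [← CharTwo.sub_eq_add, sub_eq_zero]; exact h
    rw [hiff1]
    constructor
    · intro h
      calc b ^ 2 ^ k = (b ^ 2 ^ (n - k)) ^ 2 ^ k := by rw [← h]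
        _ = b ^ 2 ^ n := by rw [← pow_mul, ← pow_add, Nat.sub_add_cancel hkn]
        _ = b := pow_card_eq hcard b
    · intro h
      calc b = b ^ 2 ^ n := (pow_card_eq hcard b).symm
        _ = (b ^ 2 ^ k) ^ 2 ^ (n - k) := by
            rw [← pow_mul, ← pow_add, Nat.add_sub_cancel' hkn]
        _ = b ^ 2 ^ (n - k) := by rw [h]
  have hBadcard : Bad.card ≤ 2 ^ k := by
    set p : F[X] := X ^ 2 ^ k - X with hp
    have hpne : p ≠ 0 := by
      intro h0
      have hco : p.coeff 1 = -1 := by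
        rw [hp, Polynomial.coeff_sub, Polynomial.coeff_X_pow, Polynomial.coeff_X_one]
        have h1 : (1:ℕ) ≠ 2 ^ k := by omega
        simp [h1]
      rw [h0] at hco
      simp at hco
    have hsub : Bad.val ⊆ p.roots := by
      intro b hb
      rw [Finset.mem_val, hBad, Finset.mem_filter] at hb
      rw [Polynomial.mem_roots hpne]
      simp [hp, Polynomial.IsRoot.def, sub_eq_zero, hb.2]
    have h1 := Polynomial.card_le_degree_of_subset_roots hsub
    have h2 : p.natDegree ≤ 2 ^ k := by
      refine le_trans (Polynomial.natDegree_sub_le _ _) ?_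
      rw [Polynomial.natDegree_X_pow, Polynomial.natDegree_X]
      omega
    omega
  have h0Bad : (0 : F) ∈ Bad := by
    rw [hBad, Finset.mem_filter]
    exact ⟨Finset.mem_univ 0, by rw [zero_pow (by positivity)]⟩
  -- the counting sum
  set S : ℤ := ∑ s : Fˣ, ∑ v : F,
    (if v + v ^ 2 ^ k + 1 + c * (s : F) ^ e' = 0 then (1:ℤ) else 0) with hS
  -- Step A: S = ∑_{b ∈ Bad} ε(b) T(bc)
  have horth : ∀ z : F, (2 ^ n : ℤ) * (if z = 0 then (1:ℤ) else 0) =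
      ∑ b : F, eps n (b * z) := by
    intro z
    rw [sum_eps_mul hn hcard]
    split_ifs <;> ring
  have hfact : ∀ b : F, (∑ s : Fˣ, ∑ v : F,
      eps n (b * (v + v ^ 2 ^ k + 1 + c * (s : F) ^ e'))) =
      (if b + b ^ 2 ^ (n - k) = 0 then (2 ^ n : ℤ) else 0) * (eps n b * T (b * c)) := by
    intro b
    have hpoint : ∀ (s : Fˣ) (v : F),
        eps n (b * (v + v ^ 2 ^ k + 1 + c * (s : F) ^ e')) =
        eps n ((b + b ^ 2 ^ (n - k)) * v) * (eps n b * eps n ((b * c) * (s : F) ^ e')) := by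
      intro s v
      have h1 : b * (v + v ^ 2 ^ k + 1 + c * (s : F) ^ e') =
          (b * v + b * v ^ 2 ^ k) + (b + (b * c) * (s : F) ^ e') := by ring
      rw [h1, eps_add hcard, eps_add hcard (b * v), eps_add hcard b]
      have h2 : eps n (b * v ^ 2 ^ k) = eps n (b ^ 2 ^ (n - k) * v) := by
        rw [← eps_pow_pow hcard (n - k) (b * v ^ 2 ^ k)]
        congr 1
        rw [mul_pow, ← pow_mul, ← pow_add, Nat.add_sub_cancel' hkn, pow_card_eq hcard]
      rw [h2, ← eps_add hcard (b * v), ← add_mul]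
    calc (∑ s : Fˣ, ∑ v : F, eps n (b * (v + v ^ 2 ^ k + 1 + c * (s : F) ^ e')))
        = ∑ s : Fˣ, ((∑ v : F, eps n ((b + b ^ 2 ^ (n - k)) * v)) *
            (eps n b * eps n ((b * c) * (s : F) ^ e'))) := by
          refine Finset.sum_congr rfl fun s _ => ?_
          rw [Finset.sum_mul]
          exact Finset.sum_congr rfl fun v _ => hpoint s v
      _ = (if b + b ^ 2 ^ (n - k) = 0 then (2 ^ n : ℤ) else 0) *
            (eps n b * T (b * c)) := by
          have hz : ∑ v : F, eps n ((b + b ^ 2 ^ (n - k)) * v) =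
              if b + b ^ 2 ^ (n - k) = 0 then (2 ^ n : ℤ) else 0 := by
            rw [← sum_eps_mul hn hcard (b + b ^ 2 ^ (n - k))]
            exact Finset.sum_congr rfl fun v _ => by rw [mul_comm]
          rw [Finset.sum_congr rfl fun s (_ : s ∈ Finset.univ) => by rw [hz]]
          rw [← Finset.mul_sum, ← Finset.mul_sum]
  have keyA : (2 ^ n : ℤ) * S = 2 ^ n * ∑ b ∈ Bad, eps n b * T (b * c) := by
    calc (2 ^ n : ℤ) * S
        = ∑ s : Fˣ, ∑ v : F, (2 ^ n : ℤ) *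
            (if v + v ^ 2 ^ k + 1 + c * (s : F) ^ e' = 0 then (1:ℤ) else 0) := by
          rw [hS, Finset.mul_sum]
          exact Finset.sum_congr rfl fun s _ => Finset.mul_sum _ _ _
      _ = ∑ s : Fˣ, ∑ v : F, ∑ b : F,
            eps n (b * (v + v ^ 2 ^ k + 1 + c * (s : F) ^ e')) :=
          Finset.sum_congr rfl fun s _ => Finset.sum_congr rfl fun v _ => horth _
      _ = ∑ s : Fˣ, ∑ b : F, ∑ v : F,
            eps n (b * (v + v ^ 2 ^ k + 1 + c * (s : F) ^ e')) :=
          Finset.sum_congr rfl fun s _ => Finset.sum_comm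
      _ = ∑ b : F, ∑ s : Fˣ, ∑ v : F,
            eps n (b * (v + v ^ 2 ^ k + 1 + c * (s : F) ^ e')) := Finset.sum_comm
      _ = ∑ b : F, (if b + b ^ 2 ^ (n - k) = 0 then (2 ^ n : ℤ) else 0) *
            (eps n b * T (b * c)) := Finset.sum_congr rfl fun b _ => hfact b
      _ = ∑ b : F, (if b ^ 2 ^ k = b then (2 ^ n : ℤ) * (eps n b * T (b * c)) else 0) := by
          refine Finset.sum_congr rfl fun b _ => ?_
          rw [ite_mul, zero_mul]
          exact if_congr (hbadiff b) rfl rfl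
      _ = ∑ b ∈ Bad, (2 ^ n : ℤ) * (eps n b * T (b * c)) := by
          rw [hBad, Finset.sum_filter]
      _ = 2 ^ n * ∑ b ∈ Bad, eps n b * T (b * c) := (Finset.mul_sum _ _ _).symm
  have hSeq : S = ∑ b ∈ Bad, eps n b * T (b * c) :=
    mul_left_cancel₀ (a := (2 ^ n : ℤ)) (by positivity) keyA
  have hT0 : T (0 * c) = (M : ℤ) := by
    rw [zero_mul, hT]
    simp only [zero_mul, eps_zero]
    rw [Finset.sum_const, Finset.card_univ, ← hM]
    simp
  have hsplit0 : S = (M:ℤ) + ∑ b ∈ Bad.erase 0, eps n b * T (b * c) := by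
    rw [hSeq, ← Finset.add_sum_erase _ _ h0Bad, eps_zero, hT0, one_mul]
  -- bound the remainder
  set K' : ℤ := 2 ^ ((n + 1) / 2) * d with hK'
  have hK'nonneg : 0 ≤ K' := by positivity
  have habs : ∀ x : F, |eps n x| = 1 := by
    intro x; unfold eps; split_ifs <;> simp
  have hTb : ∀ b ∈ Bad.erase 0, |eps n b * T (b * c)| ≤ K' := by
    intro b hb
    have hbne : b ≠ 0 := (Finset.mem_erase.mp hb).1
    have hbc : b * c ≠ 0 := mul_ne_zero hbne hc0
    have hsq : (T (b * c)) ^ 2 ≤ 2 ^ n * (d:ℤ) ^ 2 := by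
      rw [hTre]
      exact T_bound hn hcard d hdpos (b * c) hbc
    have hK2 : 2 ^ n * (d:ℤ) ^ 2 ≤ K' ^ 2 := by
      rw [hK', mul_pow, ← pow_mul]
      have hle : n ≤ (n+1)/2 * 2 := by omega
      have h2 : (2:ℤ) ^ n ≤ 2 ^ ((n+1)/2 * 2) := pow_le_pow_right₀ (by norm_num) hle
      exact mul_le_mul_of_nonneg_right h2 (sq_nonneg _)
    rw [abs_mul, habs b, one_mul]
    have h5 : |T (b * c)| ^ 2 ≤ K' ^ 2 := by
      rw [sq_abs]
      exact le_trans hsq hK2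
    by_contra hcon
    push_neg at hcon
    have h6 := pow_lt_pow_left₀ hcon hK'nonneg (two_ne_zero)
    omega
  have hcerase : ((Bad.erase 0).card : ℤ) ≤ (2 ^ k : ℤ) - 1 := by
    have h1 : (Bad.erase 0).card = Bad.card - 1 := Finset.card_erase_of_mem h0Bad
    have h2 : 1 ≤ Bad.card := Finset.card_pos.mpr ⟨0, h0Bad⟩
    have h3 : (Bad.erase 0).card ≤ 2 ^ k - 1 := by omega
    calc ((Bad.erase 0).card : ℤ) ≤ ((2 ^ k - 1 : ℕ) : ℤ) := by exact_mod_cast h3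
      _ = (2 ^ k : ℤ) - 1 := by
          rw [Nat.cast_sub (by omega)]
          push_cast
          ring
  have hrest : |∑ b ∈ Bad.erase 0, eps n b * T (b * c)| ≤ ((2 ^ k : ℤ) - 1) * K' := by
    calc |∑ b ∈ Bad.erase 0, eps n b * T (b * c)|
        ≤ ∑ b ∈ Bad.erase 0, |eps n b * T (b * c)| := Finset.abs_sum_le_sum_abs _ _
      _ ≤ ∑ _b ∈ Bad.erase 0, K' := Finset.sum_le_sum hTb
      _ = ((Bad.erase 0).card : ℤ) * K' := by rw [Finset.sum_const, nsmul_eq_mul]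
      _ ≤ ((2 ^ k : ℤ) - 1) * K' := mul_le_mul_of_nonneg_right hcerase hK'nonneg
  -- final arithmetic : ((2^k - 1) * K' < M)
  have harith : ((2 ^ k : ℤ) - 1) * K' < (M:ℤ) := by
    have hMZ : (M:ℤ) = 2 ^ n - 1 := by
      rw [hMcard, Nat.cast_sub (by omega)]
      push_cast
      ring
    have hdZ : (d:ℤ) = 2 ^ j - 1 := by
      rw [hd, Nat.cast_sub (by omega)]
      push_cast
      ring
    have hkey : (2:ℤ) ^ ((n+1)/2) * 2 ^ (j + k) ≤ 2 ^ n := by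
      rw [← pow_add]
      exact pow_le_pow_right₀ (by norm_num) (by omega)
    have h2a : (1:ℤ) ≤ 2 ^ ((n+1)/2) := one_le_pow₀ (by norm_num)
    have h2jZ : (2:ℤ) ≤ 2 ^ j := by exact_mod_cast h2j
    have h2kZ : (2:ℤ) ≤ 2 ^ k := by exact_mod_cast h2k
    have hjkZ : (2:ℤ) ^ (j + k) = 2 ^ j * 2 ^ k := pow_add 2 j k
    have e2 : ((2:ℤ) ^ k - 1) * ((2:ℤ) ^ j - 1) ≤ 2 ^ j * 2 ^ k - 3 := by nlinarith
    rw [hK', hMZ, hdZ]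
    calc ((2:ℤ) ^ k - 1) * (2 ^ ((n+1)/2) * ((2:ℤ) ^ j - 1))
        = 2 ^ ((n+1)/2) * (((2:ℤ) ^ k - 1) * ((2:ℤ) ^ j - 1)) := by ring
      _ ≤ 2 ^ ((n+1)/2) * (2 ^ j * 2 ^ k - 3) :=
          mul_le_mul_of_nonneg_left e2 (by positivity)
      _ = 2 ^ ((n+1)/2) * 2 ^ (j + k) - 3 * 2 ^ ((n+1)/2) := by rw [hjkZ]; ring
      _ ≤ 2 ^ n - 3 * 2 ^ ((n+1)/2) := by linarith [hkey]
      _ < 2 ^ n - 1 := by linarith [h2a]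
  -- S > 0
  have hSpos : 0 < S := by
    have h1 : -(((2 ^ k : ℤ) - 1) * K') ≤ ∑ b ∈ Bad.erase 0, eps n b * T (b * c) :=
      neg_le_of_abs_le hrest
    rw [hsplit0]
    linarith
  -- extract a solution
  have hex : ∃ (s : Fˣ) (v : F), v + v ^ 2 ^ k + 1 + c * (s : F) ^ e' = 0 := by
    by_contra hno
    push_neg at hno
    have hS0 : S = 0 := by
      rw [hS]
      exact Finset.sum_eq_zero fun s _ =>
        Finset.sum_eq_zero fun v _ => if_neg (hno s v)
    omega
  obtain ⟨s, v, hrel⟩ := hex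
  refine ⟨(s:F), v, Units.ne_zero s, ?_, hrel⟩
  -- v ≠ 0
  intro hv0
  rw [hv0, zero_pow (by positivity)] at hrel
  have h2 : 1 + c * (s:F) ^ e' = 0 := by linear_combination hrel
  have h3 : c * (s:F) ^ e' = -1 := by linear_combination h2
  rw [CharTwo.neg_eq] at h3
  have hy := hc (((s:F) ^ (2 ^ k + 1))⁻¹)
  apply hy
  rw [← inv_pow, ← pow_mul, ← he', inv_pow]
  exact inv_eq_of_mul_eq_one_left h3

end GoldPpN

open GoldPpN in
/-- For `j ∣ n`, `n > 2(j+k)`, `gcd(2^n - 1, 2^k + 1) = 1`, and `c` not a `(2^j - 1)`-th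
power in `𝔽_{2^n}`, the Gold function `F(x) = x^{2^k + 1}` is not P℘N for
`℘(x) = c·x^{2^j}`: there is a nonzero `a` for which
`x ↦ (x+a)^{2^k+1} + c·x^{2^j(2^k+1)}` is not a permutation of `𝔽_{2^n}`. -/
theorem gold_not_PpN (n j k : ℕ) (hj : 0 < j) (hk : 0 < k) (hjn : j ∣ n)
    (hbig : 2 * (j + k) < n) (hgcd : Nat.gcd (2 ^ n - 1) (2 ^ k + 1) = 1)
    (c : GaloisField 2 n)
    (hc : ∀ y : GaloisField 2 n, y ^ (2 ^ j - 1) ≠ c) :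
    ∃ a : GaloisField 2 n, a ≠ 0 ∧
      ¬ Function.Bijective (fun x : GaloisField 2 n =>
        (x + a) ^ (2 ^ k + 1) + c * x ^ (2 ^ j * (2 ^ k + 1))) := by
  classical
  have hn : n ≠ 0 := by omega
  letI : Fintype (GaloisField 2 n) := Fintype.ofFinite _
  have hcard : Fintype.card (GaloisField 2 n) = 2 ^ n := by
    rw [← Nat.card_eq_fintype_card]
    exact GaloisField.card 2 n hn
  obtain ⟨s, v, hs, hv, hrel⟩ := exists_sv hn hcard j k hj hk hbig hgcd c hc
  refine ⟨v * s, mul_ne_zero hv hs, ?_⟩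
  intro hbij
  set G := fun x : GaloisField 2 n =>
    (x + v * s) ^ (2 ^ k + 1) + c * x ^ (2 ^ j * (2 ^ k + 1)) with hG
  have hexp : (2:ℕ) ^ j * (2 ^ k + 1) = (2 ^ k + 1) + (2 ^ k + 1) * (2 ^ j - 1) := by
    have h1 : (1:ℕ) ≤ 2 ^ j := Nat.one_le_two_pow
    calc (2:ℕ) ^ j * (2 ^ k + 1) = (2 ^ k + 1) * 2 ^ j := mul_comm _ _
      _ = (2 ^ k + 1) * (1 + (2 ^ j - 1)) := by rw [Nat.add_sub_cancel' h1]
      _ = (2 ^ k + 1) + (2 ^ k + 1) * (2 ^ j - 1) := by ring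
  have hG0 : G 0 = (v * s) ^ 2 ^ k * (v * s) := by
    rw [hG]
    simp only [zero_add]
    rw [zero_pow (by positivity), mul_zero, add_zero, pow_succ]
  have hGs : G s = (v * s) ^ 2 ^ k * (v * s) := by
    have e1 : (s + v * s) ^ (2 ^ k + 1) = (s ^ 2 ^ k + (v * s) ^ 2 ^ k) * (s + v * s) := by
      rw [pow_succ, add_pow_char_pow]
    have e2 : s ^ (2 ^ j * (2 ^ k + 1)) =
        (s ^ 2 ^ k * s) * s ^ ((2 ^ k + 1) * (2 ^ j - 1)) := by
      rw [hexp, pow_add, pow_succ]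
    rw [hG]
    simp only []
    rw [e1, e2, mul_pow]
    set P := s ^ 2 ^ k with hP
    set V := v ^ 2 ^ k with hV
    set E := s ^ ((2 ^ k + 1) * (2 ^ j - 1)) with hE
    linear_combination (P * s) * hrel
  have h0s : (0 : GaloisField 2 n) = s := hbij.injective (hG0.trans hGs.symm)
  exact hs h0s.symm
end

section
/- Let m be an odd positive integer, n = 2m, and let b ∈ F_{2^n} satisfy b^{2^m} = b (i.e., b lies in the subfield F_{2^m}) with b ≠ 0 and b ≠ 1. Define F : F_{2^n} → F_{2^n} by F(x) = b·x + (x^{2^m} + x)^3. Then F is a permutation of F_{2^n}, and for every a ∈ F_{2^n} the map x ↦ F(x+a) + F(F(x)) is a permutation of F_{2^n}; that is, F is P℘N with respect to the orthomorphism ℘ = F. -/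
/-- For `n = 2m` with `m` odd and `b ∈ 𝔽_{2^m} \ {0,1}`, the map
`F(x) = b·x + (x^{2^m} + x)^3` is a permutation of `𝔽_{2^n}` which is P℘N for the
orthomorphism `℘ = F`. -/
theorem PpN_self (m n : ℕ) (hm0 : 0 < m) (hm : Odd m) (hn : n = 2 * m)
    (b : GaloisField 2 n) (hbsub : b ^ (2 ^ m) = b) (hb0 : b ≠ 0) (hb1 : b ≠ 1)
    (F : GaloisField 2 n → GaloisField 2 n)
    (hF : ∀ x : GaloisField 2 n, F x = b * x + (x ^ (2 ^ m) + x) ^ 3) :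
    Function.Bijective F ∧
    ∀ a : GaloisField 2 n,
      Function.Bijective (fun x : GaloisField 2 n => F (x + a) + F (F x)) := by
  have hn0 : n ≠ 0 := by omega
  haveI : Fintype (GaloisField 2 n) := Fintype.ofFinite _
  have hcard : Fintype.card (GaloisField 2 n) = 2 ^ n := by
    rw [← Nat.card_eq_fintype_card]; exact GaloisField.card 2 n hn0
  have h2 : (2 : GaloisField 2 n) = 0 := CharTwo.two_eq_zero
  -- x^{q·q} = x
  have hpow : ∀ x : GaloisField 2 n, (x ^ (2 ^ m)) ^ (2 ^ m) = x := by
    intro x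
    rw [← pow_mul]
    have : 2 ^ m * 2 ^ m = Fintype.card (GaloisField 2 n) := by
      rw [hcard, hn, two_mul, pow_add]
    rw [this, FiniteField.pow_card]
  have hadd : ∀ x y : GaloisField 2 n, (x + y) ^ (2 ^ m) = x ^ (2 ^ m) + y ^ (2 ^ m) := by
    intro x y; exact add_pow_char_pow x y (p := 2) (n := m)
  -- Frobenius of F x
  have hFq : ∀ x : GaloisField 2 n, (F x) ^ (2 ^ m) = b * x ^ (2 ^ m) + (x ^ (2 ^ m) + x) ^ 3 := by
    intro x
    rw [hF, hadd, mul_pow, hbsub, pow_right_comm, hadd, hpow]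
    ring
  -- relative trace of F x : T (F x) = b * T x
  have hTF : ∀ x : GaloisField 2 n, (F x) ^ (2 ^ m) + F x = b * (x ^ (2 ^ m) + x) := by
    intro x
    rw [hFq, hF]
    linear_combination ((x ^ (2 ^ m) + x) ^ 3) * h2
  have hb1' : b + 1 ≠ 0 := by
    intro h
    apply hb1
    have : b = -1 := by linear_combination h
    rw [this, CharTwo.neg_eq]
  have hbb : b + b ^ 2 ≠ 0 := by
    intro h
    have : b * (1 + b) = 0 := by linear_combination h
    rcases mul_eq_zero.mp this with h' | h'
    · exact hb0 h'
    · exact hb1' (by linear_combination h')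
  -- injectivity of F
  have hFinj : Function.Injective F := by
    intro x y hxy
    have e1 : b * (x ^ (2 ^ m) + x) = b * (y ^ (2 ^ m) + y) := by
      rw [← hTF x, ← hTF y, hxy]
    have e2 : x ^ (2 ^ m) + x = y ^ (2 ^ m) + y := mul_left_cancel₀ hb0 e1
    have e3 : b * x = b * y := by
      rw [hF, hF] at hxy
      rw [e2] at hxy
      linear_combination hxy
    exact mul_left_cancel₀ hb0 e3
  refine ⟨Finite.injective_iff_bijective.mp hFinj, fun a => ?_⟩
  -- the PpN maps
  apply Finite.injective_iff_bijective.mp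
  intro x y heq
  simp only at heq
  -- expansion of G z := F (z+a) + F (F z)
  have hG : ∀ z : GaloisField 2 n, F (z + a) + F (F z)
      = b * z + b ^ 2 * z + b * a + ((z ^ (2 ^ m) + z) + (a ^ (2 ^ m) + a)) ^ 3
        + b * (z ^ (2 ^ m) + z) ^ 3 + b ^ 3 * (z ^ (2 ^ m) + z) ^ 3 := by
    intro z
    rw [hF (z + a), hF (F z), hTF z, hF z, hadd]
    ring
  -- trace of G z
  have hTG : ∀ z : GaloisField 2 n, (F (z + a) + F (F z)) ^ (2 ^ m) + (F (z + a) + F (F z))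
      = (b + b ^ 2) * (z ^ (2 ^ m) + z) + b * (a ^ (2 ^ m) + a) := by
    intro z
    rw [hadd (F (z + a)) (F (F z))]
    have h1 := hTF (z + a)
    have h2' := hTF (F z)
    have h4 := hTF z
    have h3 := hadd z a
    linear_combination h1 + h2' + b * h4 + b * h3
  have e1 : (b + b ^ 2) * (x ^ (2 ^ m) + x) + b * (a ^ (2 ^ m) + a)
      = (b + b ^ 2) * (y ^ (2 ^ m) + y) + b * (a ^ (2 ^ m) + a) := by
    rw [← hTG x, ← hTG y, heq]
  have e2 : (b + b ^ 2) * (x ^ (2 ^ m) + x) = (b + b ^ 2) * (y ^ (2 ^ m) + y) := by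
    linear_combination e1
  have e3 : x ^ (2 ^ m) + x = y ^ (2 ^ m) + y := mul_left_cancel₀ hbb e2
  rw [hG x, hG y, e3] at heq
  have e4 : (b + b ^ 2) * x = (b + b ^ 2) * y := by linear_combination heq
  exact mul_left_cancel₀ hbb e4
end

section
/- Let m be an odd positive integer, n = 2m, and let b ∈ F_{2^n} satisfy b^{2^m} = b (i.e., b lies in the subfield F_{2^m}) with b ≠ 0 and b ≠ 1. Then F(x) = b·x + (x^{2^m} + x)^3 is an orthomorphism of F_{2^n}: both F and the map x ↦ F(x) + x = (b+1)·x + (x^{2^m} + x)^3 are permutations of F_{2^n}. -/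
section Aux

variable {K : Type*} [Field K] [Fintype K] [CharP K 2]

/-- Key injectivity lemma: over a field of cardinality `2^(2m)`, for any nonzero `c`
in the subfield `𝔽_{2^m}`, the map `x ↦ c·x + (x^{2^m} + x)^3` is injective. -/
lemma orth_key (m : ℕ) (hcard : Fintype.card K = 2 ^ (2 * m))
    (c : K) (hc : c ^ (2 ^ m) = c) (hc0 : c ≠ 0) :
    Function.Injective (fun x : K => c * x + (x ^ (2 ^ m) + x) ^ 3) := by
  have hadd : ∀ a b : K, (a + b) ^ (2 ^ m) = a ^ (2 ^ m) + b ^ (2 ^ m) := fun a b =>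
    add_pow_char_pow a b 2 m
  have hφ : ∀ x : K, (x ^ (2 ^ m)) ^ (2 ^ m) = x := by
    intro x
    rw [← pow_mul, ← pow_add, ← two_mul, ← hcard]
    exact FiniteField.pow_card x
  have hTfix : ∀ z : K, (z ^ (2 ^ m) + z) ^ (2 ^ m) = z ^ (2 ^ m) + z := by
    intro z
    rw [hadd, hφ, add_comm]
  -- Applying `y ↦ y^{2^m} + y` to `F z` gives `c * (z^{2^m} + z)`.
  have h2 : ∀ z : K,
      (c * z + (z ^ (2 ^ m) + z) ^ 3) ^ (2 ^ m) + (c * z + (z ^ (2 ^ m) + z) ^ 3)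
        = c * (z ^ (2 ^ m) + z) := by
    intro z
    rw [hadd, mul_pow, hc, ← pow_mul, mul_comm 3, pow_mul, hTfix]
    linear_combination CharTwo.add_self_eq_zero ((z ^ (2 ^ m) + z) ^ 3)
  intro x y h
  simp only at h
  have hT : c * (x ^ (2 ^ m) + x) = c * (y ^ (2 ^ m) + y) := by
    rw [← h2 x, ← h2 y, h]
  have hTxy : x ^ (2 ^ m) + x = y ^ (2 ^ m) + y := mul_left_cancel₀ hc0 hT
  rw [hTxy] at h
  have hx : c * x = c * y := add_right_cancel h
  exact mul_left_cancel₀ hc0 hx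

end Aux

/-- For `n = 2m` with `m` odd and `b ∈ 𝔽_{2^m} \ {0,1}`, the map
`F(x) = b·x + (x^{2^m} + x)^3` is an orthomorphism of `𝔽_{2^n}`: both `F` and
`x ↦ F(x) + x = (b+1)·x + (x^{2^m} + x)^3` are permutations. -/
theorem orthomorphism_example (m n : ℕ) (hm0 : 0 < m) (hm : Odd m) (hn : n = 2 * m)
    (b : GaloisField 2 n) (hbsub : b ^ (2 ^ m) = b) (hb0 : b ≠ 0) (hb1 : b ≠ 1)
    (F : GaloisField 2 n → GaloisField 2 n)
    (hF : ∀ x : GaloisField 2 n, F x = b * x + (x ^ (2 ^ m) + x) ^ 3) :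
    Function.Bijective F ∧
    Function.Bijective (fun x : GaloisField 2 n => F x + x) := by
  haveI : Fintype (GaloisField 2 n) := Fintype.ofFinite _
  have hn0 : n ≠ 0 := by omega
  have hcard : Fintype.card (GaloisField 2 n) = 2 ^ (2 * m) := by
    rw [← Nat.card_eq_fintype_card, GaloisField.card 2 n hn0, hn]
  have hFeq : F = fun x => b * x + (x ^ (2 ^ m) + x) ^ 3 := funext hF
  have hb1' : b + 1 ≠ 0 := by
    intro h
    apply hb1
    have := CharTwo.add_self_eq_zero (1 : GaloisField 2 n)
    linear_combination h - this
  have hbsub' : (b + 1) ^ (2 ^ m) = b + 1 := by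
    rw [add_pow_char_pow, hbsub, one_pow]
  constructor
  · rw [hFeq]
    exact (Finite.injective_iff_bijective).mp (orth_key m hcard b hbsub hb0)
  · have : (fun x : GaloisField 2 n => F x + x)
        = fun x => (b + 1) * x + (x ^ (2 ^ m) + x) ^ 3 := by
      funext x
      rw [hF x]; ring
    rw [this]
    exact (Finite.injective_iff_bijective).mp (orth_key m hcard (b + 1) hbsub' hb1')
end

section
/- Let m be an odd positive integer, n = 2m, let b ∈ F_{2^n} satisfy b^{2^m} = b with b ≠ 0 and b ≠ 1, and let c ∈ F_{2^n} satisfy c^{2^m} = c (i.e., b, c lie in the subfield F_{2^m}). Then the map H : F_{2^n} → F_{2^n} defined by H(x) = (b + b^2)·x + (b + 1)·(x^{2^m} + x)^3 + c·(x^{2^m} + x)^2 + (c^2 + b)·(x^{2^m} + x) is a permutation of F_{2^n}. -/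
/-- For `n = 2m` with `m` odd, `b ∈ 𝔽_{2^m} \ {0,1}` and `c ∈ 𝔽_{2^m}`, the map
`H(x) = (b+b²)x + (b+1)(x^{2^m}+x)³ + c(x^{2^m}+x)² + (c²+b)(x^{2^m}+x)` is a
permutation of `𝔽_{2^n}`. -/
theorem H_is_permutation (m n : ℕ) (hm0 : 0 < m) (hm : Odd m) (hn : n = 2 * m)
    (b c : GaloisField 2 n) (hbsub : b ^ (2 ^ m) = b) (hb0 : b ≠ 0) (hb1 : b ≠ 1)
    (hcsub : c ^ (2 ^ m) = c)
    (H : GaloisField 2 n → GaloisField 2 n)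
    (hH : ∀ x : GaloisField 2 n,
      H x = (b + b ^ 2) * x + (b + 1) * (x ^ (2 ^ m) + x) ^ 3
        + c * (x ^ (2 ^ m) + x) ^ 2 + (c ^ 2 + b) * (x ^ (2 ^ m) + x)) :
    Function.Bijective H := by
  haveI : Fact (Nat.Prime 2) := ⟨Nat.prime_two⟩
  haveI : Fintype (GaloisField 2 n) := Fintype.ofFinite _
  have hn0 : n ≠ 0 := by omega
  have hcard : Fintype.card (GaloisField 2 n) = 2 ^ n := by
    rw [← Nat.card_eq_fintype_card]; exact GaloisField.card 2 n hn0
  -- x^(2^m) ^ (2^m) = x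
  have hpow : ∀ x : GaloisField 2 n, (x ^ (2 ^ m)) ^ (2 ^ m) = x := by
    intro x
    rw [← pow_mul, ← pow_add]
    have : m + m = n := by omega
    rw [this, ← hcard, FiniteField.pow_card]
  have h2 : (2 : GaloisField 2 n) = 0 := by
    have := CharP.cast_eq_zero (GaloisField 2 n) 2
    simpa using this
  -- trace-like values are fixed by the q-Frobenius
  have hT : ∀ z : GaloisField 2 n, (z ^ (2 ^ m) + z) ^ (2 ^ m) = z ^ (2 ^ m) + z := by
    intro z
    rw [add_pow_char_pow, hpow, add_comm]
  rw [Finite.injective_iff_bijective.symm]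
  intro x y hxy
  rw [hH x, hH y] at hxy
  set u := x ^ (2 ^ m) + x with hu_def
  set v := y ^ (2 ^ m) + y with hv_def
  have hu : u ^ (2 ^ m) = u := hT x
  have hv : v ^ (2 ^ m) = v := hT y
  -- apply the q-power Frobenius to both sides
  have hE2 := congrArg (iterateFrobenius (GaloisField 2 n) 2 m) hxy
  simp only [map_add, map_mul, map_pow, iterateFrobenius_def, one_pow, hbsub, hcsub, hu, hv] at hE2
  -- cancel: (b+b²)(x^q + x) = (b+b²)(y^q + y)
  have ha : b + b ^ 2 ≠ 0 := by
    intro h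
    rcases mul_eq_zero.mp (show b * (1 + b) = 0 by linear_combination h) with h' | h'
    · exact hb0 h'
    · exact hb1 (by linear_combination h' - h2)
  have key : (b + b ^ 2) * u = (b + b ^ 2) * v := by
    linear_combination hxy + hE2 +
      ((b + 1) * v ^ 3 + c * v ^ 2 + (c ^ 2 + b) * v
        - (b + 1) * u ^ 3 - c * u ^ 2 - (c ^ 2 + b) * u) * h2
  have huv : u = v := mul_left_cancel₀ ha key
  rw [huv] at hxy
  have : (b + b ^ 2) * x = (b + b ^ 2) * y := by linear_combination hxy
  exact mul_left_cancel₀ ha this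
end

section
/- Let q be a power of an odd prime p, let m and k be positive integers, and set n = 2m. Define F : F_{q^n} → F_{q^n} by F(x) = (x^{q^m} − x)^{2k} − x. Then F is a permutation of F_{q^n}, and for every a ∈ F_{q^n} the map x ↦ F(x+a) − F(F(x)) is a permutation of F_{q^n}; that is, F is P℘N with respect to the orthomorphism ℘ = F. -/
/-- For `q` a power of an odd prime, `n = 2m` and `k ≥ 1`, the map
`F(x) = (x^{q^m} - x)^{2k} - x` is a permutation of `𝔽_{q^n}` which is P℘N with respect
to the orthomorphism `℘ = F`. Here `𝔽_{q^n} = GaloisField p (e·n)` where `q = p^e`. -/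
theorem PpN_odd_char_example (p e q m k n : ℕ) [Fact p.Prime] (hp : Odd p)
    (he : 0 < e) (hq : q = p ^ e) (hm : 0 < m) (hk : 0 < k) (hn : n = 2 * m)
    (F : GaloisField p (e * n) → GaloisField p (e * n))
    (hF : ∀ x : GaloisField p (e * n), F x = (x ^ (q ^ m) - x) ^ (2 * k) - x) :
    Function.Bijective F ∧
    ∀ a : GaloisField p (e * n),
      Function.Bijective (fun x : GaloisField p (e * n) => F (x + a) - F (F x)) := by
  haveI : Fintype (GaloisField p (e * n)) := Fintype.ofFinite _
  have hqm : q ^ m = p ^ (e * m) := by rw [hq, ← pow_mul]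
  have hσ : ∀ x : GaloisField p (e * n), iterateFrobenius (GaloisField p (e * n)) p (e * m) x = x ^ q ^ m := by
    intro x; rw [hqm, iterateFrobenius_def]
  set σ : GaloisField p (e * n) →+* GaloisField p (e * n) := iterateFrobenius (GaloisField p (e * n)) p (e * m) with hσdef
  have hen : e * n ≠ 0 := Nat.mul_ne_zero he.ne' (by omega)
  have hcard : Fintype.card (GaloisField p (e * n)) = p ^ (e * n) := by rw [← Nat.card_eq_fintype_card]; exact GaloisField.card p (e * n) hen
  have hσσ : ∀ x : GaloisField p (e * n), σ (σ x) = x := by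
    intro x
    rw [hσ, hσ, ← pow_mul, hqm, ← pow_add]
    have h1 : e * m + e * m = e * n := by rw [hn]; ring
    rw [h1, ← hcard, FiniteField.pow_card]
  set T : GaloisField p (e * n) → GaloisField p (e * n) := fun x => σ x - x with hT
  have hTadd : ∀ x y : GaloisField p (e * n), T (x + y) = T x + T y := by
    intro x y; simp only [hT, map_add]; ring
  have hσT : ∀ x : GaloisField p (e * n), σ (T x) = - T x := by
    intro x; simp only [hT, map_sub, hσσ]; ring
  have hσG : ∀ x : GaloisField p (e * n), σ ((T x) ^ (2 * k)) = (T x) ^ (2 * k) := by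
    intro x; rw [map_pow, hσT, Even.neg_pow ⟨k, by ring⟩]
  have hF' : ∀ x : GaloisField p (e * n), F x = (T x) ^ (2 * k) - x := by
    intro x; rw [hF, ← hσ]
  have hTF : ∀ x : GaloisField p (e * n), T (F x) = - T x := by
    intro x
    have : T (F x) = σ ((T x) ^ (2 * k) - x) - ((T x) ^ (2 * k) - x) := by
      rw [hT]; rw [hF' x]
    rw [this, map_sub, hσG]
    simp only [hT]; ring
  have hFF : ∀ x : GaloisField p (e * n), F (F x) = x := by
    intro x
    rw [hF' (F x), hTF, Even.neg_pow ⟨k, by ring⟩, hF' x]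
    ring
  have htwo : (2 : GaloisField p (e * n)) ≠ 0 := by
    have hp2 : p ≠ 2 := by
      rintro rfl; exact (by decide : ¬ Odd 2) hp
    have : ((2 : ℕ) : GaloisField p (e * n)) ≠ 0 := by
      intro hzero
      have hd := (CharP.cast_eq_zero_iff (GaloisField p (e * n)) p 2).mp hzero
      exact hp2 ((Nat.prime_dvd_prime_iff_eq Fact.out Nat.prime_two).mp hd)
    simpa using this
  refine ⟨Function.Involutive.bijective hFF, ?_⟩
  intro a
  have heq : (fun x : GaloisField p (e * n) => F (x + a) - F (F x)) = fun x : GaloisField p (e * n) => F (x + a) - x :=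
    funext fun x => by rw [hFF]
  rw [heq]
  rw [← Finite.injective_iff_bijective]
  intro x y h
  simp only at h
  -- Step 1: T x = T y
  have hTsub : ∀ u v : GaloisField p (e * n), T (u - v) = T u - T v := by
    intro u v; simp only [hT, map_sub]; ring
  have h2 : T (F (x + a) - x) = T (F (y + a) - y) := by rw [h]
  rw [hTsub, hTsub, hTF, hTF, hTadd, hTadd] at h2
  have hTxy : T x = T y := by
    have h3 : 2 * T x = 2 * T y := by linear_combination -h2
    exact mul_left_cancel₀ htwo h3
  -- Step 2: x = y
  have h4 : T (x + a) = T (y + a) := by rw [hTadd, hTadd, hTxy]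
  rw [hF' (x + a), hF' (y + a), h4] at h
  have h5 : 2 * x = 2 * y := by linear_combination -h
  exact mul_left_cancel₀ htwo h5
end

section
/- Let q be a power of an odd prime p, let m and k be positive integers, and set n = 2m. Define F : F_{q^n} → F_{q^n} by F(x) = (x^{q^m} − x)^{2k} − x. Then F is self-invertible: F(F(x)) = x for all x ∈ F_{q^n}. -/
/-- For `q` a power of an odd prime, `n = 2m` and `k ≥ 1`, the map
`F(x) = (x^{q^m} - x)^{2k} - x` on `𝔽_{q^n}` is an involution: `F(F(x)) = x` for all `x`.
Here `𝔽_{q^n} = GaloisField p (e·n)` where `q = p^e`. -/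
theorem self_invertible (p e q m k n : ℕ) [Fact p.Prime] (hp : Odd p)
    (he : 0 < e) (hq : q = p ^ e) (hm : 0 < m) (hk : 0 < k) (hn : n = 2 * m)
    (F : GaloisField p (e * n) → GaloisField p (e * n))
    (hF : ∀ x : GaloisField p (e * n), F x = (x ^ (q ^ m) - x) ^ (2 * k) - x) :
    ∀ x : GaloisField p (e * n), F (F x) = x := by
  intro x
  have hn0 : 0 < n := by omega
  letI : Fintype (GaloisField p (e * n)) := Fintype.ofFinite _
  have hcard : Fintype.card (GaloisField p (e * n)) = p ^ (e * n) := by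
    rw [← Nat.card_eq_fintype_card]
    exact GaloisField.card p (e * n) (by positivity)
  have hqm : q ^ m = p ^ (e * m) := by rw [hq, ← pow_mul]
  have hsub : ∀ a b : GaloisField p (e * n), (a - b) ^ (q ^ m) = a ^ (q ^ m) - b ^ (q ^ m) := by
    intro a b
    rw [hqm]
    exact sub_pow_char_pow a b (e * m) (p := p)
  have hinv : ∀ a : GaloisField p (e * n), (a ^ (q ^ m)) ^ (q ^ m) = a := by
    intro a
    have hmm : q ^ m * q ^ m = Fintype.card (GaloisField p (e * n)) := by
      rw [hqm, ← pow_add, hcard, hn]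
      congr 1
      ring
    rw [← pow_mul, hmm, FiniteField.pow_card]
  set y := x ^ (q ^ m) - x with hy
  have hyF : y ^ (q ^ m) = -y := by
    rw [hy, hsub, hinv]
    ring
  have hFy : (F x) ^ (q ^ m) - F x = -y := by
    rw [hF, hsub, ← pow_right_comm, hyF, Even.neg_pow (even_two_mul k)]
    ring
  rw [hF (F x), hFy, Even.neg_pow (even_two_mul k), hF x]
  ring
end

section
/- Let p be a prime, let n and m be positive integers with m ≤ n, let ℘ be a permutation of F_{p^m}, and let F : F_{p^n} → F_{p^m} be a P℘N function. Then the graph of F is a (p^{n+m}, p^n, p^{n−m}) difference set in the quasigroup (F_{p^n} × F_{p^m}, +_℘): for every pair (a, b) ∈ F_{p^n} × F_{p^m}, the number of pairs (x₁, x₂) ∈ F_{p^n} × F_{p^n} with x₁ − x₂ = a and F(x₁) − ℘(F(x₂)) = b is exactly p^{n−m}. In particular, if m = n, this number is exactly 1 for every (a,b). -/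
/-- If `F : 𝔽_{p^n} → 𝔽_{p^m}` is P℘N for a permutation `℘` of `𝔽_{p^m}`, then the graph
of `F` is a `(p^{n+m}, p^n, p^{n-m})` difference set in the quasigroup
`(𝔽_{p^n} × 𝔽_{p^m}, +_℘)`: every `(a,b)` arises exactly `p^{n-m}` times as a quasigroup
difference of two elements of the graph. In particular the count is `1` when `m = n`. -/
theorem graph_is_quasigroup_difference_set (p n m : ℕ) [Fact p.Prime]
    (hn : 0 < n) (hm : 0 < m) (hmn : m ≤ n)
    (P : GaloisField p m → GaloisField p m) (hP : Function.Bijective P)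
    (F : GaloisField p n → GaloisField p m)
    (hF : ∀ (a : GaloisField p n) (b : GaloisField p m),
      Nat.card {x : GaloisField p n // F (x + a) - P (F x) = b} = p ^ (n - m)) :
    (∀ (a : GaloisField p n) (b : GaloisField p m),
      Nat.card {x : GaloisField p n × GaloisField p n //
        x.1 - x.2 = a ∧ F x.1 - P (F x.2) = b} = p ^ (n - m)) ∧
    (m = n → ∀ (a : GaloisField p n) (b : GaloisField p m),
      Nat.card {x : GaloisField p n × GaloisField p n //
        x.1 - x.2 = a ∧ F x.1 - P (F x.2) = b} = 1) := by
  have key : ∀ (a : GaloisField p n) (b : GaloisField p m),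
      Nat.card {x : GaloisField p n × GaloisField p n //
        x.1 - x.2 = a ∧ F x.1 - P (F x.2) = b} = p ^ (n - m) := by
    intro a b
    rw [← hF a b]
    apply Nat.card_eq_of_bijective (fun x => ⟨x.1.2, by
      obtain ⟨⟨x1, x2⟩, h1, h2⟩ := x
      simp only at h1 h2 ⊢
      have : x1 = x2 + a := by linear_combination h1
      rw [← this]; exact h2⟩)
    constructor
    · rintro ⟨⟨x1, x2⟩, h1, h2⟩ ⟨⟨y1, y2⟩, g1, g2⟩ h
      simp only [Subtype.mk.injEq] at h
      simp only at h1 g1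
      rw [sub_eq_iff_eq_add] at h1 g1
      subst h h1 g1
      rfl
    · rintro ⟨x, hx⟩
      exact ⟨⟨⟨x + a, x⟩, by simp, hx⟩, rfl⟩
  refine ⟨key, fun hmn' a b => ?_⟩
  rw [key a b, hmn', Nat.sub_self, pow_zero]
end

section
/- Let p be a prime, let n and m be positive integers with m ≤ n, let ℘ be an F_p-linear (additive) permutation of F_{p^m}, and let F : F_{p^n} → F_{p^m} be a P℘N function. Then for every two points (x₁, y₁), (x₂, y₂) ∈ F_{p^n} × F_{p^m}, the number of elements u ∈ F_{p^n} such that y₁ − F(x₁ − u) = ℘(y₂ − F(x₂ − u)) is exactly p^{n−m}. (Equivalently: setting v = y₁ − F(x₁ − u), exactly p^{n−m} translates of the graph of F satisfy that (x₁,y₁) lies in graph(F)+(u,v) and (x₂,y₂) lies in graph(F)+(u, ℘^{-1}(v)).) -/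
/-- Block property of the incidence structure from a P℘N function with `℘` additive:
for every two points `(x₁,y₁), (x₂,y₂)`, exactly `p^{n-m}` elements `u` satisfy
`y₁ - F(x₁ - u) = ℘(y₂ - F(x₂ - u))`. -/
theorem design_block_property (p n m : ℕ) [Fact p.Prime]
    (hn : 0 < n) (hm : 0 < m) (hmn : m ≤ n)
    (P : GaloisField p m → GaloisField p m) (hP : Function.Bijective P)
    (hPadd : ∀ x y : GaloisField p m, P (x + y) = P x + P y)
    (F : GaloisField p n → GaloisField p m)
    (hF : ∀ (a : GaloisField p n) (b : GaloisField p m),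
      Nat.card {x : GaloisField p n // F (x + a) - P (F x) = b} = p ^ (n - m)) :
    ∀ (x₁ x₂ : GaloisField p n) (y₁ y₂ : GaloisField p m),
      Nat.card {u : GaloisField p n //
        y₁ - F (x₁ - u) = P (y₂ - F (x₂ - u))} = p ^ (n - m) := by
  intro x₁ x₂ y₁ y₂
  have hPsub : ∀ a b : GaloisField p m, P (a - b) = P a - P b := by
    intro a b
    have := hPadd (a - b) b
    rw [sub_add_cancel] at this
    linear_combination -this
  rw [← hF (x₁ - x₂) (y₁ - P y₂)]
  apply Nat.card_congr
  refine ⟨fun u => ⟨x₂ - u.1, ?_⟩, fun x => ⟨x₂ - x.1, ?_⟩, ?_, ?_⟩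
  · have h := u.2
    rw [hPsub] at h
    have hx : x₂ - u.1 + (x₁ - x₂) = x₁ - u.1 := by ring
    rw [hx]
    linear_combination -h
  · have h := x.2
    have hx : x₂ - (x₂ - x.1) = x.1 := by ring
    rw [hx, hPsub]
    have hx2 : x₁ - (x₂ - x.1) = x.1 + (x₁ - x₂) := by ring
    rw [hx2]
    linear_combination -h
  · intro u; ext; simp
  · intro x; ext; simp
end

section
/- Let p be a prime, let n and m be positive integers with m ≤ n, and let ℘ be a permutation of F_{p^m}. Let L₁ be an F_p-linear (additive) permutation of F_{p^n}, let α₁ ∈ F_{p^n}, and let L₂ be an F_p-linear (additive) permutation of F_{p^m} satisfying L₂(℘(y)) = ℘(L₂(y)) for all y ∈ F_{p^m}. For F₁ : F_{p^n} → F_{p^m}, define F₂(x) = L₂(F₁(L₁(x) + α₁)). Then F₂ is P℘N if and only if F₁ is P℘N. -/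
/-- ℘-affine equivalence preserves the P℘N property: with `L₁` an additive permutation of
`𝔽_{p^n}`, `α₁ ∈ 𝔽_{p^n}`, and `L₂` an additive permutation of `𝔽_{p^m}` commuting with
`℘`, the function `F₂(x) = L₂(F₁(L₁(x) + α₁))` is P℘N if and only if `F₁` is P℘N. -/
theorem PpN_affine_equivalence (p n m : ℕ) [Fact p.Prime]
    (hn : 0 < n) (hm : 0 < m) (hmn : m ≤ n)
    (P : GaloisField p m → GaloisField p m) (hP : Function.Bijective P)
    (L₁ : GaloisField p n → GaloisField p n) (hL₁ : Function.Bijective L₁)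
    (hL₁add : ∀ x y : GaloisField p n, L₁ (x + y) = L₁ x + L₁ y)
    (α₁ : GaloisField p n)
    (L₂ : GaloisField p m → GaloisField p m) (hL₂ : Function.Bijective L₂)
    (hL₂add : ∀ x y : GaloisField p m, L₂ (x + y) = L₂ x + L₂ y)
    (hcomm : ∀ y : GaloisField p m, L₂ (P y) = P (L₂ y))
    (F₁ F₂ : GaloisField p n → GaloisField p m)
    (hF₂ : ∀ x : GaloisField p n, F₂ x = L₂ (F₁ (L₁ x + α₁))) :
    (∀ (a : GaloisField p n) (b : GaloisField p m),
      Nat.card {x : GaloisField p n // F₂ (x + a) - P (F₂ x) = b} = p ^ (n - m)) ↔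
    (∀ (a : GaloisField p n) (b : GaloisField p m),
      Nat.card {x : GaloisField p n // F₁ (x + a) - P (F₁ x) = b} = p ^ (n - m)) := by
  have L₂sub : ∀ u v, L₂ (u - v) = L₂ u - L₂ v := by
    intro u v
    have h := hL₂add (u - v) v
    rw [sub_add_cancel] at h
    exact eq_sub_of_add_eq h.symm
  set e₂ := Equiv.ofBijective L₂ hL₂ with he₂
  have key : ∀ a b, Nat.card {x : GaloisField p n // F₂ (x + a) - P (F₂ x) = b}
      = Nat.card {y : GaloisField p n // F₁ (y + L₁ a) - P (F₁ y) = e₂.symm b} := by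
    intro a b
    apply Nat.card_congr
    refine Equiv.subtypeEquiv ((Equiv.ofBijective L₁ hL₁).trans (Equiv.addRight α₁)) ?_
    intro x
    have h1 : F₂ (x + a) - P (F₂ x)
        = L₂ (F₁ ((L₁ x + α₁) + L₁ a) - P (F₁ (L₁ x + α₁))) := by
      rw [hF₂, hF₂, ← hcomm, ← L₂sub, hL₁add]
      ring_nf
    have h2 : ∀ t, L₂ t = e₂ t := fun t => rfl
    simp only [Equiv.trans_apply, Equiv.coe_addRight, Equiv.ofBijective_apply, h1, h2]
    exact Equiv.apply_eq_iff_eq_symm_apply e₂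
  constructor
  · intro H a b
    obtain ⟨a', ha'⟩ := hL₁.2 a
    have := key a' (e₂ b)
    rw [ha', Equiv.symm_apply_apply] at this
    rw [← this]
    exact H a' (e₂ b)
  · intro H a b
    rw [key a b]
    exact H (L₁ a) (e₂.symm b)
end
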